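/- arXiv:2510.04629 — 2 statements merged into one kernel-verified Lean document; each statement's English description precedes it below -/
import Mathlib

section
/- Let a and b be quaternions with ‖a‖ = ‖b‖ such that the product a*b is nonreal (Im(a*b) ≠ 0). Then (‖b + star a‖⁻¹ • (a * (b + star a)))² = a*b, and moreover ‖b + star a‖⁻¹ • (a * (b + star a)) = ‖a + star b‖⁻¹ • ((a + star b) * b); consequently a quaternion x satisfies x² = a*b if and only if x = ±‖b + star a‖⁻¹ • (a * (b + star a)). -/
/-!
Every quaternion satisfies `x ^ 2 + ‖x‖ ^ 2 = 2 Re x • x`. For `q = a * b` with `‖a‖ = ‖b‖` the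
numerator `a * (b + star a)` is `q + ‖q‖`, whose square is `2 (‖q‖ + Re q) • q`, while
`‖b + star a‖ ^ 2 = 2 (‖q‖ + Re q)`, which is nonzero because `q` is nonreal. Conversely every
square root `x` of `q` satisfies `2 Re x • x = q + ‖q‖`, so `x` is determined by `Re x`, and taking
real parts determines `Re x` up to sign.
-/

open Quaternion

namespace Quaternion

section CommRing

variable {R : Type*} [CommRing R]

theorem sq_add_normSq (x : ℍ[R]) : x ^ 2 + normSq x = (2 * x.re) • x := by
  rw [sq, ← self_mul_star, ← mul_add, self_add_star', mul_coe_eq_smul]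

theorem normSq_eq_re_sq_add_normSq_im (x : ℍ[R]) : normSq x = x.re ^ 2 + normSq x.im := by
  simp only [normSq_def', re_im, imI_im, imJ_im, imK_im]
  ring

theorem re_mul_comm (x y : ℍ[R]) : (x * y).re = (y * x).re := by
  simp only [re_mul]
  ring

end CommRing

theorem neg_re_lt_norm {q : ℍ[ℝ]} (hq : q.im ≠ 0) : -q.re < ‖q‖ := by
  have him : 0 < normSq q.im := lt_of_le_of_ne normSq_nonneg (normSq_ne_zero.2 hq).symm
  have hsq : q.re ^ 2 < ‖q‖ ^ 2 := by
    rw [sq ‖q‖, ← normSq_eq_norm_mul_self, normSq_eq_re_sq_add_normSq_im]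
    linarith
  nlinarith [norm_nonneg q]

theorem sq_add_norm (q : ℍ[ℝ]) : (q + ‖q‖) ^ 2 = (2 * (‖q‖ + q.re)) • q := by
  have hq := sq_add_normSq q
  rw [normSq_eq_norm_mul_self, ← sq, ← eq_sub_iff_add_eq] at hq
  rw [(coe_commute ‖q‖ q).symm.add_sq, hq, mul_assoc, mul_coe_eq_smul, two_mul (‖q‖ • q),
    ← coe_pow]
  module

theorem two_re_smul_eq_of_sq_eq {x q : ℍ[ℝ]} (hx : x ^ 2 = q) : (2 * x.re) • x = q + ‖q‖ := by
  rw [← sq_add_normSq, normSq_eq_norm_mul_self, ← hx, norm_pow, sq ‖x‖]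

theorem eq_or_eq_neg_of_sq_eq_sq {x y : ℍ[ℝ]} (hx : (x ^ 2).im ≠ 0) (h : x ^ 2 = y ^ 2) :
    x = y ∨ x = -y := by
  have hre : x.re ≠ 0 := fun h0 ↦ hx (by rw [sq_eq_neg_normSq.2 h0]; simp)
  have hxy : x.re • x = y.re • y := by
    have h2 := (two_re_smul_eq_of_sq_eq rfl).trans (two_re_smul_eq_of_sq_eq h.symm).symm
    rw [mul_smul, mul_smul] at h2
    exact smul_right_injective ℍ[ℝ] two_ne_zero h2
  have hre_sq : x.re * x.re = y.re * y.re := by simpa using congrArg (·.re) hxy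
  rcases mul_self_eq_mul_self_iff.1 hre_sq with hre_eq | hre_eq
  · left
    rw [← hre_eq] at hxy
    exact smul_right_injective ℍ[ℝ] hre hxy
  · right
    rw [show y.re = -x.re by linarith, neg_smul, ← smul_neg] at hxy
    exact smul_right_injective ℍ[ℝ] hre hxy

theorem normSq_add_star {a b : ℍ[ℝ]} (h : ‖a‖ = ‖b‖) :
    normSq (b + star a) = 2 * (‖a * b‖ + (a * b).re) := by
  rw [normSq_add, star_star, normSq_star, re_mul_comm, norm_mul, normSq_eq_norm_mul_self,
    normSq_eq_norm_mul_self, h]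
  ring

theorem mul_add_star_eq_add_star_mul {a b : ℍ[ℝ]} (h : ‖a‖ = ‖b‖) :
    a * (b + star a) = (a + star b) * b := by
  rw [mul_add, add_mul, self_mul_star, star_mul_self, normSq_eq_norm_mul_self,
    normSq_eq_norm_mul_self, h]

theorem norm_add_star_comm (a b : ℍ[ℝ]) : ‖b + star a‖ = ‖a + star b‖ := by
  rw [← norm_star, star_add, star_star, add_comm]

end Quaternion

theorem quaternion_product_sqrt (a b : ℍ[ℝ])
    (hnorm : ‖a‖ = ‖b‖) (hab : (a * b).im ≠ 0) :
    (‖b + star a‖⁻¹ • (a * (b + star a))) ^ 2 = a * b ∧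
    ‖b + star a‖⁻¹ • (a * (b + star a)) = ‖a + star b‖⁻¹ • ((a + star b) * b) ∧
    ∀ x : ℍ[ℝ], x ^ 2 = a * b ↔
      (x = ‖b + star a‖⁻¹ • (a * (b + star a)) ∨
       x = -(‖b + star a‖⁻¹ • (a * (b + star a)))) := by
  set q := a * b
  have hnum : a * (b + star a) = q + ‖q‖ := by
    rw [mul_add, self_mul_star, normSq_eq_norm_mul_self, norm_mul, hnorm]
  have hden : ‖b + star a‖ ^ 2 = 2 * (‖q‖ + q.re) := by
    rw [sq, ← normSq_eq_norm_mul_self, normSq_add_star hnorm]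
  have hden_ne : 2 * (‖q‖ + q.re) ≠ 0 := by linarith [neg_re_lt_norm hab]
  have hsq : (‖b + star a‖⁻¹ • (a * (b + star a))) ^ 2 = q := by
    rw [smul_pow, hnum, sq_add_norm, inv_pow, hden, smul_smul, inv_mul_cancel₀ hden_ne, one_smul]
  refine ⟨hsq, by rw [mul_add_star_eq_add_star_mul hnorm, norm_add_star_comm], fun x ↦ ⟨?_, ?_⟩⟩
  · intro hx
    exact eq_or_eq_neg_of_sq_eq_sq (hx ▸ hab) (hx.trans hsq.symm)
  · rintro (rfl | rfl) <;> simp only [neg_sq, hsq]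
end

section
/- Let a and b be nonreal quaternions with Re a = Re b, ‖a‖ = ‖b‖, and a*b ≠ b*a. Then a quaternion x satisfies a*x − x*b = 0 if and only if there exist real numbers λ and μ such that x = λ • ((Im a) * (Im a + Im b)) + μ • (Im a + Im b). (Up to real scaling, (Im a)(Im a + Im b)/‖Im a + Im b‖ is a square root of (Im a)·star(Im b), so the solutions are exactly x = λ√((Im a)(Im b)*) + μ·Im(a+b).) -/
/-!
Write `p = Im a`, `q = Im b` and `s = p + q`. Since `Re a = Re b` the equation reduces to
`p x = x q`, and since moreover `‖a‖ = ‖b‖` we get `p² = -‖p‖² = -‖q‖² = q²`, hence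
`p s = s q`. The element `s` is nonzero, for `q = -p` would make `b = star a` commute with `a`.
Substituting `x = u s` turns `p x = x q` into `p u = u p`, and the centralizer of a nonreal
quaternion `p` is `ℝ + ℝ p`; so `x = (l p + m) s`.
-/

open Quaternion

theorem mul_add_eq_add_mul_of_mul_self_eq {R : Type*} [NonUnitalNonAssocSemiring R] {p q : R}
    (h : p * p = q * q) : p * (p + q) = (p + q) * q := by
  rw [mul_add, add_mul, h, add_comm]

theorem mul_eq_mul_iff_commute_mul_inv {D : Type*} [DivisionRing D] {p q s : D} (x : D)
    (hs : s ≠ 0) (h : p * s = s * q) : p * x = x * q ↔ Commute p (x * s⁻¹) := by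
  obtain ⟨u, rfl⟩ : ∃ u, x = u * s := ⟨x * s⁻¹, (inv_mul_cancel_right₀ hs x).symm⟩
  rw [mul_inv_cancel_right₀ hs, Commute, SemiconjBy, mul_assoc u, ← h, ← mul_assoc, ← mul_assoc,
    mul_left_inj' hs]

namespace Quaternion

section CommRing

variable {R : Type*} [CommRing R] {a b : ℍ[R]}

theorem normSq_eq_re_sq_add_normSq_im_s16 (a : ℍ[R]) : normSq a = a.re ^ 2 + normSq a.im := by
  simp only [normSq_def', re_im, imI_im, imJ_im, imK_im]
  ring

theorem im_mul_self_eq_of_re_eq_of_normSq_eq (hre : a.re = b.re) (hn : normSq a = normSq b) :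
    a.im * a.im = b.im * b.im := by
  have him : normSq a.im = normSq b.im := by
    rw [normSq_eq_re_sq_add_normSq_im_s16 a, normSq_eq_re_sq_add_normSq_im_s16 b, hre] at hn
    exact add_left_cancel hn
  rw [← sq, ← sq, im_sq, im_sq, him]

theorem mul_sub_mul_eq_im_mul_sub_mul_im (hre : a.re = b.re) (x : ℍ[R]) :
    a * x - x * b = a.im * x - x * b.im := by
  nth_rewrite 1 [← re_add_im a, ← re_add_im b]
  rw [add_mul, mul_add, hre, coe_commutes]
  abel

theorem commute_of_re_eq_of_im_add_im_eq_zero (hre : a.re = b.re) (him : a.im + b.im = 0) :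
    Commute a b := by
  have hb : b = star a := by
    rw [← re_add_im b, ← re_add_im (star a), re_star, im_star, hre,
      eq_neg_of_add_eq_zero_right him]
  rw [hb]
  exact (star_comm_self' a).symm

end CommRing

section OrderedField

variable {R : Type*} [Field R] [LinearOrder R] [IsStrictOrderedRing R] {p u : ℍ[R]}

/- The imaginary parts of `p * u = u * p` say that the cross product `p.im × u.im` vanishes;
the vector triple product then gives `‖p.im‖² • u.im = ⟪p.im, u.im⟫ • p.im`. -/
theorem exists_im_eq_smul_im_of_commute (hp : p.im ≠ 0) (h : Commute p u) :
    ∃ l : R, u.im = l • p.im := by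
  have hN : normSq p.im ≠ 0 := normSq_ne_zero.2 hp
  have cI := congrArg QuaternionAlgebra.imI h.eq
  have cJ := congrArg QuaternionAlgebra.imJ h.eq
  have cK := congrArg QuaternionAlgebra.imK h.eq
  simp only [imI_mul, imJ_mul, imK_mul] at cI cJ cK
  refine ⟨(p.imI * u.imI + p.imJ * u.imJ + p.imK * u.imK) / normSq p.im, ?_⟩
  rw [normSq_def'] at hN ⊢
  simp only [re_im, imI_im, imJ_im, imK_im] at hN ⊢
  ext <;> simp only [re_im, imI_im, imJ_im, imK_im, re_smul, imI_smul, imJ_smul, imK_smul,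
    smul_eq_mul] <;> field_simp
  · ring
  · linear_combination (p.imK / 2) * cJ - (p.imJ / 2) * cK
  · linear_combination (p.imI / 2) * cK - (p.imK / 2) * cI
  · linear_combination (p.imJ / 2) * cI - (p.imI / 2) * cJ

theorem commute_iff_exists_eq_smul_add_coe (hp : p.im ≠ 0) :
    Commute p u ↔ ∃ l m : R, u = l • p + m := by
  constructor
  · intro h
    obtain ⟨l, hl⟩ := exists_im_eq_smul_im_of_commute hp h
    refine ⟨l, u.re - l * p.re, ?_⟩
    ext
    · simp
    · simpa using congrArg QuaternionAlgebra.imI hl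
    · simpa using congrArg QuaternionAlgebra.imJ hl
    · simpa using congrArg QuaternionAlgebra.imK hl
  · rintro ⟨l, m, rfl⟩
    exact ((Commute.refl p).smul_right l).add_right (coe_commute m p).symm

end OrderedField

end Quaternion

theorem homogeneous_sylvester_nonzero_solutions_general (a b : ℍ[ℝ])
    (ha : a.im ≠ 0)
    (hre : a.re = b.re) (hnorm : ‖a‖ = ‖b‖) (hcomm : a * b ≠ b * a)
    (x : ℍ[ℝ]) :
    a * x - x * b = 0 ↔
      ∃ l m : ℝ, x = l • (a.im * (a.im + b.im)) + m • (a.im + b.im) := by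
  have hsq : a.im * a.im = b.im * b.im := by
    refine im_mul_self_eq_of_re_eq_of_normSq_eq hre ?_
    rw [normSq_eq_norm_mul_self, normSq_eq_norm_mul_self, hnorm]
  have hs : a.im + b.im ≠ 0 := fun h ↦
    hcomm (commute_of_re_eq_of_im_add_im_eq_zero hre h).eq
  rw [mul_sub_mul_eq_im_mul_sub_mul_im hre, sub_eq_zero,
    mul_eq_mul_iff_commute_mul_inv x hs (mul_add_eq_add_mul_of_mul_self_eq hsq),
    commute_iff_exists_eq_smul_add_coe (by rwa [im_idem])]
  refine exists₂_congr fun l m ↦ ?_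
  rw [mul_inv_eq_iff_eq_mul₀ hs, add_mul, smul_mul_assoc, coe_mul_eq_smul]

theorem homogeneous_sylvester_nonzero_solutions (a b : ℍ[ℝ])
    (ha : a.im ≠ 0) (hb : b.im ≠ 0)
    (hre : a.re = b.re) (hnorm : ‖a‖ = ‖b‖) (hcomm : a * b ≠ b * a)
    (x : ℍ[ℝ]) :
    a * x - x * b = 0 ↔
      ∃ l m : ℝ, x = l • (a.im * (a.im + b.im)) + m • (a.im + b.im) :=
  homogeneous_sylvester_nonzero_solutions_general a b ha hre hnorm hcomm x
end
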